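/- Let n ≥ 2 and let ε : ZMod n → ℤ take values in {1, -1} with ∑ i, ε i = 1. Consider the process of repeatedly deleting all cyclically adjacent (+1, -1) 'inner' pairs simultaneously (i.e., passing from C_j to C_{j+1} by removing, for each maximal inner annulus, its two boundary signs). Then the sum of the remaining signs is preserved at each step, the length strictly decreases at each step while it exceeds 1, and the process terminates with a single entry equal to +1 after at most (n-1)/2 steps. -/

import Mathlib

/-- Position `i` of the list `l`, read cyclically, is the start of an "inner annulus":
the entry there is `+1` and the (cyclically) next entry is `-1`. -/
def CyclicInnerStart (l : List ℤ) (i : Fin l.length) : Prop :=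
  l.get i = 1 ∧ l.get ⟨((i : ℕ) + 1) % l.length, Nat.mod_lt _ i.pos⟩ = -1

instance (l : List ℤ) (i : Fin l.length) : Decidable (CyclicInnerStart l i) := by
  unfold CyclicInnerStart; infer_instance

/-- Delete, simultaneously, both entries of every cyclically adjacent `(+1, -1)` pair
(the boundary signs of every inner annulus) of the list `l`. -/
def delAllInner (l : List ℤ) : List ℤ :=
  (List.finRange l.length).filterMap fun i =>
    if CyclicInnerStart l i ∨
        ∃ j : Fin l.length, CyclicInnerStart l j ∧ (i : ℕ) = ((j : ℕ) + 1) % l.length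
    then none else some (l.get i)
/-! Each inner annulus is a `+1` immediately followed by a `-1`, and distinct annuli are disjoint
(no position is both `+1` and `-1`), so one step deletes as many `+1`s as `-1`s: the sum is
kept and the length drops by twice the number of annuli. A list of signs with sum `1` and length
`> 1` has an annulus: otherwise every `+1` is followed by a `+1`, so going around the cycle all
entries are `+1`, or, if there is no `+1` at all, all are `-1`; neither has sum `1`. The length
has the parity of the sum, so it is odd, and dropping by at least `2` per step it reaches `1`,
i.e. the list `[1]`, within `(n - 1) / 2` steps. -/

open Finset

theorem Fin.val_finRotate {k : ℕ} (i : Fin k) : (finRotate k i : ℕ) = (i + 1) % k := by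
  have := i.neZero
  rw [finRotate_apply, Fin.val_add, Fin.val_one']
  simp [Nat.add_mod]

theorem Fin.finRotate_induction {k : ℕ} {P : Fin k → Prop}
    (step : ∀ a, P a → P (finRotate k a)) {i : Fin k} (hi : P i) (j : Fin k) : P j := by
  match k, P, step, i, hi, j with
  | 1, _, _, i, hi, j => rwa [Subsingleton.elim j i]
  | k + 2, P, step, i, hi, j =>
    have hmove : ∀ a, finRotate (k + 2) a ≠ a := fun a =>
      Equiv.Perm.mem_support.1 (support_finRotate ▸ mem_univ a)
    obtain ⟨m, rfl⟩ := isCycle_finRotate.exists_pow_eq (hmove i) (hmove j)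
    induction m with
    | zero => exact hi
    | succ m ih => rw [pow_succ', Equiv.Perm.mul_apply]; exact step _ ih

theorem List.sum_map_filter_finRange {M : Type*} [AddCommMonoid M] {n : ℕ} (s : Finset (Fin n))
    (f : Fin n → M) : (((List.finRange n).filter (· ∈ s)).map f).sum = ∑ i ∈ s, f i := by
  rw [← List.sum_toFinset _ ((List.nodup_finRange n).filter _)]
  congr
  ext; simp

theorem List.length_filter_finRange {n : ℕ} (s : Finset (Fin n)) :
    ((List.finRange n).filter (· ∈ s)).length = #s := by
  rw [← List.toFinset_card_of_nodup ((List.nodup_finRange n).filter _)]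
  congr
  ext; simp

theorem cyclicInnerStart_iff {l : List ℤ} {i : Fin l.length} :
    CyclicInnerStart l i ↔ l.get i = 1 ∧ l.get (finRotate _ i) = -1 := by
  simp only [CyclicInnerStart, ← Fin.val_finRotate]

def innerStarts (l : List ℤ) : Finset (Fin l.length) := {i | CyclicInnerStart l i}

def innerPositions (l : List ℤ) : Finset (Fin l.length) :=
  innerStarts l ∪ (innerStarts l).map (finRotate _).toEmbedding

theorem mem_innerPositions {l : List ℤ} {i : Fin l.length} :
    i ∈ innerPositions l ↔ CyclicInnerStart l i ∨
      ∃ j : Fin l.length, CyclicInnerStart l j ∧ (i : ℕ) = ((j : ℕ) + 1) % l.length := by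
  simp only [innerPositions, innerStarts, mem_union, mem_map, mem_filter, mem_univ, true_and,
    Equiv.coe_toEmbedding, Fin.ext_iff, Fin.val_finRotate, eq_comm]

theorem delAllInner_eq_map_filter (l : List ℤ) :
    delAllInner l = ((List.finRange l.length).filter (· ∈ (innerPositions l)ᶜ)).map l.get := by
  rw [← List.filterMap_eq_map', List.filterMap_filter, delAllInner]
  congr with i
  simp only [mem_compl, mem_innerPositions, decide_not]
  split_ifs <;> simp_all

theorem disjoint_innerStarts_map (l : List ℤ) :
    Disjoint (innerStarts l) ((innerStarts l).map (finRotate _).toEmbedding) := by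
  simp only [Finset.disjoint_left, innerStarts, mem_map, mem_filter, mem_univ, true_and,
    cyclicInnerStart_iff]
  rintro _ ⟨h1, -⟩ ⟨j, ⟨-, h2⟩, rfl⟩
  simp_all

theorem sum_innerPositions (l : List ℤ) : ∑ i ∈ innerPositions l, l.get i = 0 := by
  have starts : ∀ i ∈ innerStarts l, l.get i = 1 := fun i hi =>
    (cyclicInnerStart_iff.1 (mem_filter.1 hi).2).1
  have ends : ∀ i ∈ innerStarts l, l.get (finRotate _ i) = -1 := fun i hi =>
    (cyclicInnerStart_iff.1 (mem_filter.1 hi).2).2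
  rw [innerPositions, sum_union (disjoint_innerStarts_map l), sum_map]
  simp only [Equiv.coe_toEmbedding]
  rw [sum_congr rfl starts,
    sum_congr rfl ends]
  simp

theorem card_innerPositions (l : List ℤ) : #(innerPositions l) = 2 * #(innerStarts l) := by
  rw [innerPositions, card_union_of_disjoint (disjoint_innerStarts_map l), card_map, two_mul]

theorem sum_delAllInner (l : List ℤ) : (delAllInner l).sum = l.sum := by
  rw [delAllInner_eq_map_filter, List.sum_map_filter_finRange, ← Fin.sum_univ_getElem]
  simp only [← List.get_eq_getElem]
  rw [← sum_compl_add_sum (innerPositions l), sum_innerPositions, add_zero]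

theorem length_delAllInner (l : List ℤ) :
    (delAllInner l).length + 2 * #(innerStarts l) = l.length := by
  rw [delAllInner_eq_map_filter, List.length_map, List.length_filter_finRange, card_compl,
    Fintype.card_fin, ← card_innerPositions]
  exact Nat.sub_add_cancel (card_le_univ _ |>.trans_eq (Fintype.card_fin _))

theorem delAllInner_sublist (l : List ℤ) : List.Sublist (delAllInner l) l := by
  rw [delAllInner_eq_map_filter]
  conv_rhs => rw [← List.map_get_finRange l]
  exact List.filter_sublist.map _

theorem exists_cyclicInnerStart {l : List ℤ} (hv : ∀ x ∈ l, x = 1 ∨ x = -1) (hs : l.sum = 1)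
    (hlen : 1 < l.length) : ∃ i, CyclicInnerStart l i := by
  by_contra! hno
  have step : ∀ i, l.get i = 1 → l.get (finRotate _ i) = 1 := fun i hi =>
    (hv _ (l.get_mem _)).resolve_right fun h => hno i (cyclicInnerStart_iff.2 ⟨hi, h⟩)
  obtain ⟨i, hi⟩ : ∃ i, l.get i = 1 := by
    by_contra! h
    have := l.sum_eq_card_nsmul (-1) fun x hx => by
      obtain ⟨j, rfl⟩ := List.mem_iff_get.1 hx
      exact (hv _ hx).resolve_left (h j)
    simp only [hs, smul_neg, nsmul_eq_mul, mul_one] at this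
    omega
  have := l.sum_eq_card_nsmul 1 fun x hx => by
    obtain ⟨j, rfl⟩ := List.mem_iff_get.1 hx
    exact Fin.finRotate_induction step hi j
  simp only [hs, nsmul_eq_mul, mul_one] at this
  omega

theorem length_delAllInner_add_two_le {l : List ℤ} (hv : ∀ x ∈ l, x = 1 ∨ x = -1)
    (hs : l.sum = 1) (hlen : 1 < l.length) : (delAllInner l).length + 2 ≤ l.length := by
  obtain ⟨i, hi⟩ := exists_cyclicInnerStart hv hs hlen
  have : 0 < #(innerStarts l) := card_pos.2 ⟨i, mem_filter.2 ⟨mem_univ i, hi⟩⟩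
  have := length_delAllInner l
  omega

theorem sum_iterate_delAllInner (l : List ℤ) (j : ℕ) : (delAllInner^[j] l).sum = l.sum := by
  induction j with
  | zero => rfl
  | succ j ih => rw [Function.iterate_succ_apply', sum_delAllInner, ih]

theorem iterate_delAllInner_sublist (l : List ℤ) (j : ℕ) : List.Sublist (delAllInner^[j] l) l := by
  induction j with
  | zero => exact List.Sublist.refl l
  | succ j ih => rw [Function.iterate_succ_apply']; exact (delAllInner_sublist _).trans ih

theorem eq_singleton_one_of_length_le_one {l : List ℤ} (hs : l.sum = 1) (hlen : l.length ≤ 1) :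
    l = [1] := by
  match l, hlen with
  | [], _ => simp at hs
  | [a], _ => simpa using hs

theorem delAllInner_singleton_one : delAllInner [1] = [1] := by decide

theorem iterate_delAllInner_eq_singleton_one {l : List ℤ} (hv : ∀ x ∈ l, x = 1 ∨ x = -1)
    (hs : l.sum = 1) {m : ℕ} (hlen : l.length ≤ 2 * m + 1) : delAllInner^[m] l = [1] := by
  induction m generalizing l with
  | zero => exact eq_singleton_one_of_length_le_one hs hlen
  | succ m ih =>
    rcases le_or_gt l.length 1 with hshort | hlong
    · rw [eq_singleton_one_of_length_le_one hs hshort,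
        Function.iterate_fixed delAllInner_singleton_one]
    · rw [Function.iterate_succ_apply]
      have := length_delAllInner_add_two_le hv hs hlong
      exact ih (fun x hx => hv x ((delAllInner_sublist l).subset hx))
        (by rw [sum_delAllInner, hs]) (by omega)

theorem length_emod_two_eq_sum_emod_two {l : List ℤ} (hv : ∀ x ∈ l, x = 1 ∨ x = -1) :
    (l.length : ℤ) % 2 = l.sum % 2 := by
  induction l with
  | nil => rfl
  | cons a t ih =>
    have ha := hv a List.mem_cons_self
    have := ih fun x hx => hv x (List.mem_cons_of_mem a hx)
    simp only [List.length_cons, List.sum_cons]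
    push_cast
    omega

theorem ZMod.sum_natCast_fin {M : Type*} [AddCommMonoid M] (n : ℕ) [NeZero n]
    (f : ZMod n → M) : ∑ i : Fin n, f ((i : ℕ) : ZMod n) = ∑ a, f a := by
  have hbij : Function.Bijective fun i : Fin n => ((i : ℕ) : ZMod n) :=
    (Fintype.bijective_iff_surjective_and_card _).2
      ⟨fun a => ⟨⟨a.val, a.val_lt⟩, a.natCast_zmod_val⟩, by simp⟩
  exact Fintype.sum_bijective _ hbij _ _ fun _ => rfl

theorem delAllInner_process_general (n : ℕ) [NeZero n] (ε : ZMod n → ℤ)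
    (hval : ∀ i, ε i = 1 ∨ ε i = -1) (hsum : ∑ i, ε i = 1) :
    let L : List ℤ := List.ofFn fun i : Fin n => ε ((i : ℕ) : ZMod n)
    (∀ j : ℕ, (delAllInner^[j + 1] L).sum = (delAllInner^[j] L).sum) ∧
    (∀ j : ℕ, 1 < (delAllInner^[j] L).length →
      (delAllInner^[j + 1] L).length < (delAllInner^[j] L).length) ∧
    ∃ k ≤ (n - 1) / 2, delAllInner^[k] L = [1] := by
  intro L
  have hv : ∀ x ∈ L, x = 1 ∨ x = -1 := by
    simp only [L, List.mem_ofFn, forall_exists_index, forall_apply_eq_imp_iff]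
    exact fun i => hval _
  have hs : L.sum = 1 := by rw [List.sum_ofFn, ZMod.sum_natCast_fin, hsum]
  have hv_iter : ∀ j, ∀ x ∈ delAllInner^[j] L, x = 1 ∨ x = -1 := fun j x hx =>
    hv x ((iterate_delAllInner_sublist L j).subset hx)
  have hs_iter : ∀ j, (delAllInner^[j] L).sum = 1 := fun j => (sum_iterate_delAllInner L j).trans hs
  have hodd : n % 2 = 1 := by
    have := length_emod_two_eq_sum_emod_two hv
    rw [hs, List.length_ofFn] at this
    omega
  refine ⟨fun j => by rw [Function.iterate_succ_apply', sum_delAllInner], fun j hj => ?_, ⟨_, le_rfl, ?_⟩⟩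
  · rw [Function.iterate_succ_apply']
    have := length_delAllInner_add_two_le (hv_iter j) (hs_iter j) hj
    omega
  · exact iterate_delAllInner_eq_singleton_one hv hs (by rw [List.length_ofFn]; omega)

/-- The reduction process `C₀ ⊃ C₁ ⊃ ⋯ ⊃ C_k` of Section 7: starting from `n ≥ 2` cyclic
signs `±1` with signed sum `1`, repeatedly delete all cyclically adjacent `(+1, -1)`
pairs simultaneously.  Then the signed sum is preserved at every step, the length
strictly decreases at each step while it exceeds `1`, and the process terminates at the
single-entry list `[1]` after at most `(n-1)/2` steps. -/
theorem delAllInner_process (n : ℕ) [NeZero n] (hn : 2 ≤ n) (ε : ZMod n → ℤ)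
    (hval : ∀ i, ε i = 1 ∨ ε i = -1) (hsum : ∑ i, ε i = 1) :
    let L : List ℤ := List.ofFn fun i : Fin n => ε ((i : ℕ) : ZMod n)
    (∀ j : ℕ, (delAllInner^[j + 1] L).sum = (delAllInner^[j] L).sum) ∧
    (∀ j : ℕ, 1 < (delAllInner^[j] L).length →
      (delAllInner^[j + 1] L).length < (delAllInner^[j] L).length) ∧
    ∃ k ≤ (n - 1) / 2, delAllInner^[k] L = [1] :=
  delAllInner_process_general n ε hval hsum
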